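/- Fix (p,q) ∈ ℝ² and a nonzero spinor Ψ ∈ Δ₇⁰. Then there is no parameter vector ω ∈ S(p,q,Ψ) satisfying both constraints T(ω)·Ψ = 0 and F(ω)·Ψ = 0 simultaneously. -/

import Mathlib

open Matrix

/-- A coordinate `k`-tensor on `ℝⁿ`: the values on `k`-tuples of standard basis vectors. -/
abbrev Tensor (n k : ℕ) := (Fin k → Fin n) → ℝ

/-- The tensor is alternating, i.e. it is the coordinate expression of an alternating
`k`-form on `ℝⁿ`. -/
def IsAlt {n k : ℕ} (ω : Tensor n k) : Prop :=
  ∀ (f : Fin k → Fin n) (σ : Equiv.Perm (Fin k)),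
    ω (f ∘ σ) = ((Equiv.Perm.sign σ : ℤ) : ℝ) * ω f

/-- The Clifford relations `γᵢγⱼ + γⱼγᵢ = -2 δᵢⱼ 𝟙`. -/
def CliffordRel {n N : ℕ} (γ : Fin n → Matrix (Fin N) (Fin N) ℝ) : Prop :=
  ∀ i j, γ i * γ j + γ j * γ i =
    if i = j then (-2 : ℝ) • (1 : Matrix (Fin N) (Fin N) ℝ) else 0

/-- Clifford action of a vector `X = Σ xᵢ eᵢ`: `γ(X) = Σ xᵢ γᵢ`. -/
noncomputable def gam {n N : ℕ} (γ : Fin n → Matrix (Fin N) (Fin N) ℝ)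
    (X : Fin n → ℝ) : Matrix (Fin N) (Fin N) ℝ :=
  ∑ i, X i • γ i

/-- Clifford action of an (alternating) `k`-form:
`ρ(ω) = Σ_{i₁<⋯<i_k} ω(e_{i₁},…,e_{i_k}) γ_{i₁}⋯γ_{i_k}`, written here as the
full sum over all tuples divided by `k!` (for alternating `ω` and `γ` satisfying the
Clifford relations the two expressions agree). -/
noncomputable def rho {n N : ℕ} (γ : Fin n → Matrix (Fin N) (Fin N) ℝ) {k : ℕ}
    (ω : Tensor n k) : Matrix (Fin N) (Fin N) ℝ :=
  (k.factorial : ℝ)⁻¹ • ∑ f : Fin k → Fin n, ω f • (List.ofFn fun i => γ (f i)).prod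

/-- Interior product `X ⌟ ω` in coordinates: `(X⌟ω)(Y₁,…,Y_{k}) = ω(X,Y₁,…,Y_{k})`. -/
noncomputable def inter {n k : ℕ} (X : Fin n → ℝ) (ω : Tensor n (k + 1)) : Tensor n k :=
  fun g => ∑ j, X j * ω (Fin.cons j g)

/-- Exterior product `X ∧ ω` in coordinates (identifying `X` with a `1`-form via the
standard inner product): `(X∧ω)(Y₀,…,Y_k) = Σ_j (-1)^j ⟨X,Y_j⟩ ω(Y₀,…,Ŷ_j,…,Y_k)`. -/
noncomputable def wedge {n k : ℕ} (X : Fin n → ℝ) (ω : Tensor n k) : Tensor n (k + 1) :=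
  fun h => ∑ j : Fin (k + 1), (-1 : ℝ) ^ (j : ℕ) * X (h j) * ω fun i => h (j.succAbove i)

/-- The elementary form `e_{v 0} ∧ ⋯ ∧ e_{v (k-1)}` in coordinates. -/
noncomputable def elem {n k : ℕ} (v : Fin k → Fin n) : Tensor n k :=
  fun f => Matrix.det (Matrix.of fun i j => if v i = f j then (1 : ℝ) else 0)

/-! ### The `SU(2)`-invariant families of `3`- and `4`-forms on `ℝ⁷`
(indices are `0`-based: `e₁ = E7 0, …, e₇ = E7 6`). -/

/-- The standard basis vectors of `ℝ⁷`. -/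
noncomputable def E7 (i : Fin 7) : Fin 7 → ℝ := Pi.single i 1

/-- `de₁ = e₃₅ + e₄₆`, `de₂ = e₄₅ - e₃₆`, `de₇ = e₃₄ - e₅₆`. -/
noncomputable def de : Fin 3 → Tensor 7 2 :=
  ![elem ![2, 4] + elem ![3, 5], elem ![3, 4] - elem ![2, 5], elem ![2, 3] - elem ![4, 5]]

/-- The distinguished indices `1, 2, 7` (0-based: `0, 1, 6`). -/
def idx : Fin 3 → Fin 7 := ![0, 1, 6]

/-- The distinguished index pairs `(1,2), (1,7), (2,7)` (0-based). -/
def pf : Fin 3 → Fin 7 × Fin 7 := ![(0, 1), (0, 6), (1, 6)]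

/-- The 20-dimensional parameter space
`ω = ((t_{ij}), t, (f_{ijk}), f) ∈ ℝ⁹ × ℝ × ℝ⁹ × ℝ ≅ ℝ²⁰`. -/
abbrev Param20 := (Fin 3 → Fin 3 → ℝ) × ℝ × (Fin 3 → Fin 3 → ℝ) × ℝ

/-- The invariant `3`-form `T(ω) = Σ t_{ij} eᵢ ∧ deⱼ + t e₁∧e₂∧e₇`. -/
noncomputable def Tform (ω : Param20) : Tensor 7 3 :=
  (∑ i : Fin 3, ∑ j : Fin 3, ω.1 i j • wedge (E7 (idx i)) (de j))
    + ω.2.1 • elem ![0, 1, 6]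

/-- The invariant `4`-form `F(ω) = Σ f_{ijk} eᵢ ∧ eⱼ ∧ deₖ + f e₃∧e₄∧e₅∧e₆`. -/
noncomputable def Fform (ω : Param20) : Tensor 7 4 :=
  (∑ i : Fin 3, ∑ j : Fin 3,
      ω.2.2.1 i j • wedge (E7 (pf i).1) (wedge (E7 (pf i).2) (de j)))
    + ω.2.2.2 • elem ![2, 3, 4, 5]

/-- Membership in `Δ₇⁰`, the common kernel of `γ₃γ₄+γ₅γ₆`, `γ₃γ₅-γ₄γ₆`, `γ₃γ₆+γ₄γ₅`. -/
def InDelta0 (γ : Fin 7 → Matrix (Fin 8) (Fin 8) ℝ) (Ψ : Fin 8 → ℝ) : Prop :=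
  (γ 2 * γ 3 + γ 4 * γ 5).mulVec Ψ = 0 ∧
    (γ 2 * γ 4 - γ 3 * γ 5).mulVec Ψ = 0 ∧
    (γ 2 * γ 5 + γ 3 * γ 4).mulVec Ψ = 0

/-- The solution set `S(p,q,Ψ) ⊆ ℝ²⁰` of the algebraic Killing equation
`(1/2)XΨ + (1/4)(X⌟T(ω))Ψ + p (X⌟F(ω))Ψ + q (X∧F(ω))Ψ = 0` for all `X`. -/
def KillingSet (γ : Fin 7 → Matrix (Fin 8) (Fin 8) ℝ) (p q : ℝ) (Ψ : Fin 8 → ℝ) :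
    Set Param20 :=
  {ω | ∀ X : Fin 7 → ℝ,
    (1 / 2 : ℝ) • (gam γ X).mulVec Ψ
      + (1 / 4 : ℝ) • (rho γ (inter X (Tform ω))).mulVec Ψ
      + p • (rho γ (inter X (Fform ω))).mulVec Ψ
      + q • (rho γ (wedge X (Fform ω))).mulVec Ψ = 0}

/-! Contract the Killing equation with the Clifford action: multiply its instance at `X = eᵢ` by
`γᵢ` and sum over `i`. In dimension `n`, `Σ γᵢγᵢ = -n`, `Σ γᵢ (eᵢ⌟ω) = k ω` for a `k`-form
and `Σ γᵢ (eᵢ∧ω) = (k - n) ω` for an alternating `k`-form, so the contracted equation reads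
`-(7/2) Ψ + (3/4) T·Ψ + (4p - 3q) F·Ψ = 0`. Hence `T·Ψ = F·Ψ = 0` forces `Ψ = 0`. -/

namespace CliffordRel

variable {n N : ℕ} {γ : Fin n → Matrix (Fin N) (Fin N) ℝ}

theorem mul_self (hγ : CliffordRel γ) (a : Fin n) : γ a * γ a = -1 := by
  have h := hγ a a
  rw [if_pos rfl, ← two_smul ℝ] at h
  rw [← neg_one_smul ℝ (1 : Matrix (Fin N) (Fin N) ℝ)]
  exact smul_right_injective _ (two_ne_zero (α := ℝ)) (h.trans (by norm_num [smul_smul]))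

theorem mul_anticomm_of_ne (hγ : CliffordRel γ) {a b : Fin n} (h : a ≠ b) :
    γ a * γ b = -(γ b * γ a) :=
  eq_neg_of_add_eq_zero_left ((hγ a b).trans (if_neg h))

end CliffordRel

section CliffordProd

variable {n N : ℕ} (γ : Fin n → Matrix (Fin N) (Fin N) ℝ)

noncomputable def cliffordProd {k : ℕ} (g : Fin k → Fin n) : Matrix (Fin N) (Fin N) ℝ :=
  (List.ofFn fun i => γ (g i)).prod

theorem rho_eq_sum_cliffordProd {k : ℕ} (ω : Tensor n k) :
    rho γ ω = (k.factorial : ℝ)⁻¹ • ∑ f, ω f • cliffordProd γ f := rfl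

theorem cliffordProd_cons {k : ℕ} (a : Fin n) (g : Fin k → Fin n) :
    cliffordProd γ (Fin.cons a g) = γ a * cliffordProd γ g := by
  simp [cliffordProd, List.ofFn_succ]

variable {γ}

theorem CliffordRel.cliffordProd_insertNth_of_forall_ne (hγ : CliffordRel γ) {k : ℕ}
    (j : Fin (k + 1)) (b : Fin n) (g : Fin k → Fin n) (hb : ∀ m, g m ≠ b) :
    cliffordProd γ (j.insertNth b g) = (-1 : ℝ) ^ (j : ℕ) • (γ b * cliffordProd γ g) := by
  induction k with
  | zero => simp [Fin.fin_one_eq_zero j, Fin.insertNth_zero', cliffordProd_cons]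
  | succ k ih =>
    cases j using Fin.cases with
    | zero => simp [Fin.insertNth_zero', cliffordProd_cons]
    | succ j =>
      rw [← Fin.cons_self_tail g, Fin.insertNth_succ_cons, cliffordProd_cons, cliffordProd_cons,
        ih j (Fin.tail g) fun m => hb m.succ, Matrix.mul_smul, ← Matrix.mul_assoc,
        ← Matrix.mul_assoc, hγ.mul_anticomm_of_ne (hb 0), Fin.val_succ, pow_succ, mul_neg_one,
        neg_smul, Matrix.neg_mul, smul_neg]

theorem CliffordRel.sum_mul_mul (hγ : CliffordRel γ) (b : Fin n)
    (X : Fin n → Matrix (Fin N) (Fin N) ℝ) :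
    ∑ a, γ a * (γ b * X a) = -(2 : ℝ) • X b - γ b * ∑ a, γ a * X a := by
  have hanti : ∀ a, γ a * γ b = (if a = b then (-2 : ℝ) • 1 else 0) - γ b * γ a :=
    fun a => eq_sub_of_add_eq (hγ a b)
  simp only [← Matrix.mul_assoc, hanti, Matrix.sub_mul, Finset.sum_sub_distrib, Finset.mul_sum]
  simp [ite_mul]

theorem CliffordRel.sum_mul_cliffordProd_cons (hγ : CliffordRel γ) {k : ℕ} (g : Fin k → Fin n) :
    ∑ a, γ a * cliffordProd γ (Fin.cons a g) = -(n : ℝ) • cliffordProd γ g := by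
  simp [cliffordProd_cons, ← Matrix.mul_assoc, hγ.mul_self, -nsmul_eq_mul,
    Nat.cast_smul_eq_nsmul]

-- `γ a` anticommutes with each of the `j` factors in front of it except the one equal to `a`,
-- which by injectivity occurs at most once.
theorem CliffordRel.sum_mul_cliffordProd_insertNth (hγ : CliffordRel γ) {k : ℕ}
    (j : Fin (k + 1)) (g : Fin k → Fin n) (hg : g.Injective) :
    ∑ a, γ a * cliffordProd γ (j.insertNth a g)
      = ((-1 : ℝ) ^ (j : ℕ) * (2 * j - n)) • cliffordProd γ g := by
  induction k with
  | zero => simp [Fin.fin_one_eq_zero j, Fin.insertNth_zero', hγ.sum_mul_cliffordProd_cons]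
  | succ k ih =>
    cases j using Fin.cases with
    | zero => simp [Fin.insertNth_zero', hγ.sum_mul_cliffordProd_cons]
    | succ j =>
      rw [← Fin.cons_self_tail g] at hg ⊢
      have hb : ∀ m, Fin.tail g m ≠ g 0 := fun m h => Fin.succ_ne_zero m (hg (by simpa using h))
      simp only [Fin.insertNth_succ_cons, cliffordProd_cons, hγ.sum_mul_mul,
        hγ.cliffordProd_insertNth_of_forall_ne j _ _ hb, ih j _ (Fin.cons_injective_iff.1 hg).2]
      rw [Matrix.mul_smul, Fin.val_succ]
      push_cast
      module

end CliffordProd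

theorem IsAlt.apply_eq_zero_of_not_injective {n k : ℕ} {ω : Tensor n k} (hω : IsAlt ω)
    {f : Fin k → Fin n} (hf : ¬ f.Injective) : ω f = 0 := by
  obtain ⟨i, j, hfij, hij⟩ : ∃ i j, f i = f j ∧ i ≠ j := by
    simpa [Function.Injective] using hf
  have hswap : f ∘ Equiv.swap i j = f := by
    rw [Equiv.comp_swap_eq_update]
    simp [hfij]
  have h := hω f (Equiv.swap i j)
  rw [hswap, Equiv.Perm.sign_swap hij] at h
  push_cast at h
  linarith

def altTensors (n k : ℕ) : Submodule ℝ (Tensor n k) where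
  carrier := {ω | IsAlt ω}
  add_mem' {ω η} hω hη f σ := by
    simp only [Pi.add_apply, hω f σ, hη f σ]
    ring
  zero_mem' f σ := by simp
  smul_mem' c ω hω f σ := by
    simp only [Pi.smul_apply, smul_eq_mul, hω f σ]
    ring

theorem elem_mem_altTensors {n k : ℕ} (v : Fin k → Fin n) : elem v ∈ altTensors n k := by
  intro f σ
  have hperm : (Matrix.of fun i j => if v i = (f ∘ σ) j then (1 : ℝ) else 0)
      = (Matrix.of fun i j => if v i = f j then (1 : ℝ) else 0).submatrix id σ := rfl
  rw [elem, hperm, Matrix.det_permute']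
  rfl

theorem wedge_add {n k : ℕ} (X : Fin n → ℝ) (ω η : Tensor n k) :
    wedge X (ω + η) = wedge X ω + wedge X η := by
  funext h
  simp only [wedge, Pi.add_apply, mul_add, Finset.sum_add_distrib]

theorem wedge_sub {n k : ℕ} (X : Fin n → ℝ) (ω η : Tensor n k) :
    wedge X (ω - η) = wedge X ω - wedge X η := by
  funext h
  simp only [wedge, Pi.sub_apply, mul_sub, Finset.sum_sub_distrib]

theorem wedge_single_elem {n k : ℕ} (i : Fin n) (v : Fin k → Fin n) :
    wedge (Pi.single i 1) (elem v) = elem (Fin.cons i v) := by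
  funext h
  rw [elem, Matrix.det_succ_row_zero]
  refine Finset.sum_congr rfl fun j _ => ?_
  simp [elem, Pi.single_apply, eq_comm, Matrix.submatrix]

theorem wedge_single_wedge_single_de_mem_altTensors (a b : Fin 7) (j : Fin 3) :
    wedge (Pi.single a 1) (wedge (Pi.single b 1) (de j)) ∈ altTensors 7 4 := by
  fin_cases j <;>
  simp only [de, Fin.zero_eta, Fin.mk_one, Fin.reduceFinMk, Matrix.cons_val, wedge_add, wedge_sub,
    wedge_single_elem] <;>
  first
  | exact add_mem (elem_mem_altTensors _) (elem_mem_altTensors _)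
  | exact sub_mem (elem_mem_altTensors _) (elem_mem_altTensors _)

theorem Fform_mem_altTensors (ω : Param20) : Fform ω ∈ altTensors 7 4 :=
  add_mem (Submodule.sum_mem _ fun _ _ => Submodule.sum_mem _ fun j _ =>
      Submodule.smul_mem _ _ (wedge_single_wedge_single_de_mem_altTensors _ _ j))
    (Submodule.smul_mem _ _ (elem_mem_altTensors _))

section Contraction

variable {n N : ℕ} (γ : Fin n → Matrix (Fin N) (Fin N) ℝ)

theorem gam_single (i : Fin n) : gam γ (Pi.single i 1) = γ i := by
  simp [gam, Pi.single_apply]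

theorem inter_single {k : ℕ} (i : Fin n) (ω : Tensor n (k + 1)) (g : Fin k → Fin n) :
    inter (Pi.single i 1) ω g = ω (Fin.cons i g) := by
  simp [inter, Pi.single_apply]

theorem sum_mul_rho_inter_single {k : ℕ} (ω : Tensor n (k + 1)) :
    ∑ i, γ i * rho γ (inter (Pi.single i 1) ω) = ((k + 1 : ℕ) : ℝ) • rho γ ω := by
  have hsplit : ∑ i, ∑ g : Fin k → Fin n, ω (Fin.cons i g) • cliffordProd γ (Fin.cons i g)
      = ∑ f : Fin (k + 1) → Fin n, ω f • cliffordProd γ f :=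
    (Fintype.sum_prod_type' _).symm.trans
      (Fintype.sum_equiv (Fin.consEquiv fun _ => Fin n) _ _ fun _ => rfl)
  simp only [rho_eq_sum_cliffordProd, Matrix.mul_smul, Finset.mul_sum, inter_single,
    ← cliffordProd_cons, ← Finset.smul_sum, hsplit, smul_smul, Nat.factorial_succ]
  congr 1
  have := k.factorial_pos.ne'
  field_simp
  push_cast
  ring

theorem sum_mul_wedge_single_smul_cliffordProd {k : ℕ}
    (ω : Tensor n k) (h : Fin (k + 1) → Fin n) :
    ∑ i, wedge (Pi.single i 1) ω h • (γ i * cliffordProd γ h)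
      = ∑ j : Fin (k + 1),
          ((-1 : ℝ) ^ (j : ℕ) * ω (h ∘ j.succAbove)) • (γ (h j) * cliffordProd γ h) := by
  simp only [wedge, Finset.sum_smul]
  rw [Finset.sum_comm]
  refine Finset.sum_congr rfl fun j _ => ?_
  simp [Pi.single_apply, ite_smul, Function.comp_def]

theorem sum_mul_rho_wedge_single_eq_sum_insertNth {k : ℕ} (ω : Tensor n k) :
    ∑ i, γ i * rho γ (wedge (Pi.single i 1) ω)
      = ((k + 1).factorial : ℝ)⁻¹ • ∑ j : Fin (k + 1), (-1 : ℝ) ^ (j : ℕ) •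
          ∑ g : Fin k → Fin n, ω g • ∑ a, γ a * cliffordProd γ (j.insertNth a g) := by
  simp only [rho_eq_sum_cliffordProd, Matrix.mul_smul, Finset.mul_sum, ← Finset.smul_sum]
  rw [Finset.sum_comm,
    Finset.sum_congr rfl fun h _ => sum_mul_wedge_single_smul_cliffordProd γ ω h, Finset.sum_comm]
  congr 1
  refine Finset.sum_congr rfl fun j _ => ?_
  rw [← (Fin.insertNthEquiv (fun _ => Fin n) j).sum_comp, Fintype.sum_prod_type, Finset.sum_comm]
  simp [Finset.smul_sum, smul_smul, Fin.insertNthEquiv, Fin.insertNth_comp_succAbove]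

variable {γ}

theorem CliffordRel.sum_mul_gam_single (hγ : CliffordRel γ) :
    ∑ i, γ i * gam γ (Pi.single i 1) = -(n : ℝ) • 1 := by
  simp [gam_single, hγ.mul_self, -nsmul_eq_mul, Nat.cast_smul_eq_nsmul]

theorem CliffordRel.sum_smul_sum_mul_cliffordProd_insertNth (hγ : CliffordRel γ) {k : ℕ}
    {ω : Tensor n k} (hω : IsAlt ω) (j : Fin (k + 1)) :
    ∑ g : Fin k → Fin n, ω g • ∑ a, γ a * cliffordProd γ (j.insertNth a g)
      = ((-1 : ℝ) ^ (j : ℕ) * (2 * j - n)) • ∑ g, ω g • cliffordProd γ g := by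
  rw [Finset.smul_sum]
  refine Finset.sum_congr rfl fun g _ => ?_
  by_cases hg : g.Injective
  · rw [hγ.sum_mul_cliffordProd_insertNth j g hg, smul_comm]
  · simp [hω.apply_eq_zero_of_not_injective hg]

theorem CliffordRel.sum_mul_rho_wedge_single (hγ : CliffordRel γ) {k : ℕ} {ω : Tensor n k}
    (hω : IsAlt ω) :
    ∑ i, γ i * rho γ (wedge (Pi.single i 1) ω) = ((k : ℝ) - n) • rho γ ω := by
  have hgauss : ∀ m : ℕ, ∑ j : Fin (m + 1), (2 * (j : ℝ) - n) = (m + 1) * (m - n) := by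
    intro m
    induction m with
    | zero => simp
    | succ m ih =>
      rw [Fin.sum_univ_castSucc]
      simp only [Fin.val_castSucc, Fin.val_last, ih]
      push_cast
      ring
  have hsign : ∀ j : Fin (k + 1),
      (-1 : ℝ) ^ (j : ℕ) * ((-1 : ℝ) ^ (j : ℕ) * (2 * j - n)) = 2 * j - n := by
    intro j
    rw [← mul_assoc, ← pow_add, ← two_mul, pow_mul, neg_one_sq, one_pow, one_mul]
  rw [sum_mul_rho_wedge_single_eq_sum_insertNth]
  simp only [hγ.sum_smul_sum_mul_cliffordProd_insertNth hω, smul_smul, hsign, ← Finset.sum_smul,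
    hgauss, rho_eq_sum_cliffordProd, Nat.factorial_succ]
  congr 1
  have := k.factorial_pos.ne'
  field_simp
  push_cast
  ring

end Contraction

section Killing

variable {n N : ℕ} (γ : Fin n → Matrix (Fin N) (Fin N) ℝ)

noncomputable def killingOp (p q : ℝ) {k l : ℕ} (T : Tensor n (k + 1)) (F : Tensor n (l + 1))
    (X : Fin n → ℝ) : Matrix (Fin N) (Fin N) ℝ :=
  (1 / 2 : ℝ) • gam γ X + (1 / 4 : ℝ) • rho γ (inter X T) + p • rho γ (inter X F)
    + q • rho γ (wedge X F)

variable {γ}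

theorem CliffordRel.sum_mul_killingOp (hγ : CliffordRel γ) (p q : ℝ) {k l : ℕ}
    (T : Tensor n (k + 1)) {F : Tensor n (l + 1)} (hF : IsAlt F) :
    ∑ i, γ i * killingOp γ p q T F (Pi.single i 1)
      = (-(n : ℝ) / 2) • 1 + ((k + 1 : ℝ) / 4) • rho γ T
        + (p * (l + 1) + q * (l + 1 - n)) • rho γ F := by
  simp only [killingOp, Matrix.mul_add, Matrix.mul_smul, Finset.sum_add_distrib,
    ← Finset.smul_sum, hγ.sum_mul_gam_single, sum_mul_rho_inter_single,
    hγ.sum_mul_rho_wedge_single hF]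
  push_cast
  module

end Killing

theorem mem_killingSet_iff (γ : Fin 7 → Matrix (Fin 8) (Fin 8) ℝ) (p q : ℝ) (Ψ : Fin 8 → ℝ)
    (ω : Param20) :
    ω ∈ KillingSet γ p q Ψ ↔ ∀ X, killingOp γ p q (Tform ω) (Fform ω) X *ᵥ Ψ = 0 := by
  simp only [KillingSet, Set.mem_ofPred_eq, killingOp, Matrix.add_mulVec, Matrix.smul_mulVec]

theorem no_simultaneous_torsion_and_flux_constraint_general
    (γ : Fin 7 → Matrix (Fin 8) (Fin 8) ℝ) (hγ : CliffordRel γ)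
    (p q : ℝ) (Ψ : Fin 8 → ℝ) (hne : Ψ ≠ 0) :
    ¬ ∃ ω ∈ KillingSet γ p q Ψ,
        (rho γ (Tform ω)).mulVec Ψ = 0 ∧ (rho γ (Fform ω)).mulVec Ψ = 0 := by
  rintro ⟨ω, hK, hT, hF⟩
  rw [mem_killingSet_iff] at hK
  have hcontract :
      (∑ i, γ i * killingOp γ p q (Tform ω) (Fform ω) (Pi.single i 1)) *ᵥ Ψ = 0 := by
    simp [Matrix.sum_mulVec, ← Matrix.mulVec_mulVec, hK]
  rw [hγ.sum_mul_killingOp p q (Tform ω) (Fform_mem_altTensors ω)] at hcontract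
  simp only [Matrix.add_mulVec, Matrix.smul_mulVec, hT, hF, Matrix.one_mulVec, smul_zero,
    add_zero] at hcontract
  exact hne ((smul_eq_zero.mp hcontract).resolve_left (by norm_num))

/-- For fixed `(p,q)` and a nonzero spinor `Ψ ∈ Δ₇⁰`, no
`ω ∈ S(p,q,Ψ)` satisfies both `T(ω)·Ψ = 0` and `F(ω)·Ψ = 0`. -/
theorem no_simultaneous_torsion_and_flux_constraint
    (γ : Fin 7 → Matrix (Fin 8) (Fin 8) ℝ) (hγ : CliffordRel γ)
    (p q : ℝ) (Ψ : Fin 8 → ℝ) (hΨ : InDelta0 γ Ψ) (hne : Ψ ≠ 0) :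
    ¬ ∃ ω ∈ KillingSet γ p q Ψ,
        (rho γ (Tform ω)).mulVec Ψ = 0 ∧ (rho γ (Fform ω)).mulVec Ψ = 0 :=
  no_simultaneous_torsion_and_flux_constraint_general γ hγ p q Ψ hne
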